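/- arXiv:2307.13228 — 4 statements merged into one kernel-verified Lean document; each statement's English description precedes it below -/
import Mathlib

section
/- If M is a finite L-structure and A ⊆ M is a set such that M is semantically A-rigid, then M is syntactically A-rigid, i.e. dcl(A) = M. -/
/-! Index a tuple by `M` itself: `id : M → M`. As `M → M` is finite, the realizations of
`tp(id/A)` form an intersection of finitely many `A`-definable sets, hence an `A`-definable set.
A realization `g` satisfies every `L`-formula that `id` satisfies, so it is an elementary
self-embedding of `M` fixing `A`, bijective by finiteness, and rigidity forces `g = id`.
Projecting this one-point set to the coordinate `b` defines `{b}` over `A`. -/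

open FirstOrder Language Set

universe u v w

variable (L : FirstOrder.Language.{u, v}) (M : Type w) [L.Structure M]

/-- The definable closure of `A`: the set of `b` such that `{b}` is definable
with parameters from `A`. -/
def dcl (A : Set M) : Set M := {b : M | A.Definable₁ L ({b} : Set M)}

/-- `M` is semantically `A`-rigid if every automorphism fixing `A` pointwise is the identity. -/
def SemRigid (A : Set M) : Prop :=
  ∀ f : M ≃[L] M, (∀ a ∈ A, f a = a) → ∀ x : M, f x = x

/-- `M` is syntactically `A`-rigid if `dcl(A) = M`. -/
def SyntRigid (A : Set M) : Prop := dcl L M A = Set.univ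

/-- The ∀-semantic degree of rigidity. -/
noncomputable def degForallSem : ℕ∞ :=
  sInf {n : ℕ∞ | ∃ m : ℕ, n = m ∧ ∀ A : Finset M, A.card = m → SemRigid L M ↑A}

/-- The ∃-semantic degree of rigidity. -/
noncomputable def degExistsSem : ℕ∞ :=
  sInf {n : ℕ∞ | ∃ m : ℕ, n = m ∧ ∃ A : Finset M, A.card = m ∧ SemRigid L M ↑A}

/-- The ∀-syntactic degree of rigidity. -/
noncomputable def degForallSynt : ℕ∞ :=
  sInf {n : ℕ∞ | ∃ m : ℕ, n = m ∧ ∀ A : Finset M, A.card = m → SyntRigid L M ↑A}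

/-- The ∃-syntactic degree of rigidity. -/
noncomputable def degExistsSynt : ℕ∞ :=
  sInf {n : ℕ∞ | ∃ m : ℕ, n = m ∧ ∃ A : Finset M, A.card = m ∧ SyntRigid L M ↑A}

section TypeRealizations

variable {L M} {A : Set M} {α : Type*}

theorem Set.definable_sInter_of_finite {S : Set (Set (α → M))} (hS : S.Finite)
    (h : ∀ s ∈ S, A.Definable L s) : A.Definable L (⋂₀ S) := by
  have := hS.to_subtype
  rw [sInter_eq_iInter]
  exact definable_iInter_of_finite fun s => h s s.2

variable (L) in
def typeRealizations (A : Set M) (x : α → M) : Set (α → M) :=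
  ⋂₀ {s | A.Definable L s ∧ x ∈ s}

theorem mem_typeRealizations_self (x : α → M) : x ∈ typeRealizations L A x :=
  mem_sInter.2 fun _ hs => hs.2

theorem definable_typeRealizations [Finite α] [Finite M] (x : α → M) :
    A.Definable L (typeRealizations L A x) :=
  definable_sInter_of_finite (toFinite _) fun _ hs => hs.1

theorem mem_iff_of_mem_typeRealizations {x y : α → M} (hy : y ∈ typeRealizations L A x)
    {s : Set (α → M)} (hs : A.Definable L s) : y ∈ s ↔ x ∈ s :=
  ⟨fun hys => by_contra fun hxs => mem_sInter.1 hy sᶜ ⟨hs.compl, hxs⟩ hys,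
    fun hxs => mem_sInter.1 hy s ⟨hs, hxs⟩⟩

theorem realize_iff_of_mem_typeRealizations {x y : α → M} (hy : y ∈ typeRealizations L A x)
    (φ : L[[A]].Formula α) : φ.Realize y ↔ φ.Realize x :=
  mem_iff_of_mem_typeRealizations hy ⟨φ, rfl⟩

variable {g : M → M}

def ElementaryEmbedding.ofMemTypeRealizationsId (hg : g ∈ typeRealizations L A id) :
    M ↪ₑ[L] M where
  toFun := g
  map_formula' n φ x := by
    simpa using realize_iff_of_mem_typeRealizations hg
      ((L.lhomWithConstants A).onFormula (φ.relabel x))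

theorem apply_eq_self_of_mem_typeRealizations_id (hg : g ∈ typeRealizations L A id)
    {a : M} (ha : a ∈ A) : g a = a := by
  simpa using realize_iff_of_mem_typeRealizations hg
    ((Term.var a).equal (L.con (⟨a, ha⟩ : A)).term)

theorem SemRigid.eq_id_of_mem_typeRealizations [Finite M] (h : SemRigid L M A)
    (hg : g ∈ typeRealizations L A id) : g = id := by
  let e := ElementaryEmbedding.ofMemTypeRealizationsId hg
  have hbij : g.Bijective := Finite.injective_iff_bijective.1 e.injective
  funext x
  exact h ⟨Equiv.ofBijective g hbij, e.toEmbedding.map_fun', e.toEmbedding.map_rel'⟩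
    (fun a ha => apply_eq_self_of_mem_typeRealizations_id hg ha) x

end TypeRealizations

/-- If `M` is a finite structure that is semantically `A`-rigid, then it is
syntactically `A`-rigid, i.e. `dcl(A) = M`. -/
theorem stmt_1 [Finite M] (A : Set M) (h : SemRigid L M A) : SyntRigid L M A := by
  refine eq_univ_of_forall fun b => ?_
  have hid : typeRealizations L A (id : M → M) = {id} :=
    eq_singleton_iff_unique_mem.2
      ⟨mem_typeRealizations_self id, fun g hg => h.eq_id_of_mem_typeRealizations hg⟩
  have hb := (definable_typeRealizations (L := L) (A := A) id).image_comp fun _ : Fin 1 => b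
  rw [hid, image_singleton] at hb
  show A.Definable L _
  convert hb using 1
  ext x
  simp [funext_iff, Fin.forall_fin_one]
end

section
/- Let L be a purely relational language all of whose relation symbols are unary, and let M be a finite L-structure with exactly n+1 elements that is not semantically ∅-rigid. Then deg^{∀-sem}_rig(M) = n and deg^{∀-synt}_rig(M) = n. -/
open FirstOrder Language Set

universe u v w

variable (L : FirstOrder.Language.{u, v}) (M : Type w) [L.Structure M]

/-!
An automorphism moving `a` to `b ≠ a` shows that `a` and `b` satisfy the same unary relations,
so in a unary language the transposition `(a b)` is an automorphism; it fixes every set avoiding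
`a` and `b`, and with `n + 1` elements every size below `n` is realised by such a set. Such a set
is not syntactically rigid either, because sets definable over `A` are invariant under
automorphisms fixing `A`. Conversely a set of size `n` misses a single point, which is fixed by
every automorphism fixing the set and is definable as the complement of a finite union of
singletons.
-/

open FirstOrder.Language.Structure

variable {L M}

def FirstOrder.Language.Equiv.withConstants (f : M ≃[L] M) (A : Set M)
    (hf : ∀ a ∈ A, f a = a) : M ≃[L[[A]]] M where
  toEquiv := f.toEquiv
  map_fun' := by
    intro n g x
    cases g with
    | inl g => exact f.map_fun' g x
    | inr c =>
      cases n with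
      | zero => exact hf c c.2
      | succ k => exact PEmpty.elim c
  map_rel' := by
    intro n r x
    cases r with
    | inl r => exact f.map_rel' r x
    | inr r => exact isEmptyElim r

theorem Set.Definable₁.apply_mem_iff {A s : Set M} (hs : A.Definable₁ L s) (f : M ≃[L] M)
    (hf : ∀ a ∈ A, f a = a) (x : M) : f x ∈ s ↔ x ∈ s := by
  obtain ⟨φ, hφ⟩ := hs
  have hreal : ∀ y : M, y ∈ s ↔ φ.Realize (fun _ : Fin 1 => y) := fun y => by
    simpa using Set.ext_iff.mp hφ (fun _ => y)
  rw [hreal, hreal]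
  exact StrongHomClass.realize_formula (f.withConstants A hf) φ

theorem apply_eq_of_mem_dcl {A : Set M} {b : M} (hb : b ∈ dcl L M A) (f : M ≃[L] M)
    (hf : ∀ a ∈ A, f a = a) : f b = b :=
  (Set.Definable₁.apply_mem_iff hb f hf b).2 rfl

theorem SyntRigid.semRigid {A : Set M} (h : SyntRigid L M A) : SemRigid L M A :=
  fun f hf x => apply_eq_of_mem_dcl (h ▸ Set.mem_univ x) f hf

theorem semRigid_of_compl_subsingleton {A : Set M} (h : Aᶜ.Subsingleton) : SemRigid L M A := by
  intro f hf x
  by_contra hx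
  have hxA : x ∉ A := fun hmem => hx (hf x hmem)
  have hfxA : f x ∉ A := fun hmem => hx (f.injective (hf _ hmem))
  exact hx (h hfxA hxA)

theorem Set.Finite.definable₁_self {A : Set M} (hA : A.Finite) : A.Definable₁ L A := by
  have : Finite A := hA
  have hunion : {v : Fin 1 → M | v 0 ∈ A} = ⋃ a : A, {v | v 0 ∈ ({(a : M)} : Set M)} := by
    ext v
    simp
  rw [Set.Definable₁, hunion]
  exact Set.definable_iUnion_of_finite fun a => Set.Definable.singleton_of_mem L a.2

theorem syntRigid_of_compl_subsingleton {A : Set M} (hA : A.Finite) (h : Aᶜ.Subsingleton) :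
    SyntRigid L M A := by
  refine Set.eq_univ_of_forall fun x => ?_
  by_cases hx : x ∈ A
  · exact Set.Definable.singleton_of_mem L hx
  · have hsingleton : ({x} : Set M) = Aᶜ :=
      (Set.subsingleton_iff_singleton hx).1 h |>.symm
    show A.Definable₁ L {x}
    rw [hsingleton]
    exact Set.Definable.compl hA.definable₁_self

def equivOfUnaryRelMap [L.IsRelational] (hUnary : ∀ k : ℕ, k ≠ 1 → IsEmpty (L.Relations k))
    (σ : Equiv.Perm M)
    (hσ : ∀ (r : L.Relations 1) (x : M), RelMap r (fun _ => σ x) ↔ RelMap r (fun _ => x)) :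
    M ≃[L] M where
  toEquiv := σ
  map_fun' := fun g _ => isEmptyElim g
  map_rel' := by
    intro n r x
    match n, r, x with
    | 0, r, _ => exact (hUnary 0 (by omega)).elim r
    | k + 2, r, _ => exact (hUnary (k + 2) (by omega)).elim r
    | 1, r, x =>
      have hx : x = fun _ => x 0 := funext fun i => by rw [Subsingleton.elim i 0]
      rw [hx]
      exact hσ r (x 0)

theorem relMap_swap_iff [DecidableEq M] {a b : M} {n : ℕ} (r : L.Relations n)
    (hab : RelMap r (fun _ => a) ↔ RelMap r (fun _ => b)) (x : M) :
    RelMap r (fun _ => Equiv.swap a b x) ↔ RelMap r (fun _ => x) := by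
  rcases eq_or_ne x a with rfl | hxa
  · rw [Equiv.swap_apply_left]; exact hab.symm
  rcases eq_or_ne x b with rfl | hxb
  · rw [Equiv.swap_apply_right]; exact hab
  · rw [Equiv.swap_apply_of_ne_of_ne hxa hxb]

theorem not_semRigid_of_swap [L.IsRelational]
    (hUnary : ∀ k : ℕ, k ≠ 1 → IsEmpty (L.Relations k)) {a b : M} (hab : a ≠ b)
    (htype : ∀ r : L.Relations 1, RelMap r (fun _ => a) ↔ RelMap r (fun _ => b))
    {A : Set M} (ha : a ∉ A) (hb : b ∉ A) : ¬ SemRigid L M A := by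
  classical
  intro hrigid
  let g := equivOfUnaryRelMap hUnary (Equiv.swap a b) fun r => relMap_swap_iff r (htype r)
  have hfix : ∀ x ∈ A, g x = x := fun x hx =>
    Equiv.swap_apply_of_ne_of_ne (ne_of_mem_of_not_mem hx ha) (ne_of_mem_of_not_mem hx hb)
  exact hab ((Equiv.swap_apply_left a b).symm.trans (hrigid g hfix a)).symm

theorem Finset.exists_card_eq_notMem_pair [Fintype M] [DecidableEq M] (a b : M) {m : ℕ}
    (hm : m + 2 ≤ Fintype.card M) : ∃ A : Finset M, A.card = m ∧ a ∉ A ∧ b ∉ A := by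
  have hcard : m ≤ ({a, b}ᶜ : Finset M).card := by
    rw [Finset.card_compl]
    have := Finset.card_le_two (a := a) (b := b)
    omega
  obtain ⟨A, hsub, hA⟩ := Finset.exists_subset_card_eq hcard
  exact ⟨A, hA, fun h => by simpa using hsub h, fun h => by simpa using hsub h⟩

theorem Finset.coe_compl_subsingleton [Fintype M] {A : Finset M}
    (hA : Fintype.card M ≤ A.card + 1) : (↑A : Set M)ᶜ.Subsingleton := by
  classical
  rw [← Finset.coe_compl]
  refine fun x hx y hy => Finset.card_le_one.1 ?_ x hx y hy
  rw [Finset.card_compl]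
  omega

theorem ENat.sInf_natCast_setOf_eq {P : ℕ → Prop} {n : ℕ} (hn : P n) (hlt : ∀ m < n, ¬ P m) :
    sInf {k : ℕ∞ | ∃ m : ℕ, k = m ∧ P m} = n := by
  refine le_antisymm (sInf_le ⟨n, rfl, hn⟩) (le_sInf ?_)
  rintro k ⟨m, rfl, hm⟩
  exact Nat.cast_le.2 (not_lt.1 fun h => hlt m h hm)

/-- A finite structure with `n+1` elements in a unary relational language that is not
semantically ∅-rigid has ∀-semantic and ∀-syntactic degrees of rigidity equal to `n`. -/
theorem stmt_8 [L.IsRelational] (hUnary : ∀ k : ℕ, k ≠ 1 → IsEmpty (L.Relations k))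
    [Fintype M] (n : ℕ) (hcard : Fintype.card M = n + 1)
    (hnotrigid : ¬ SemRigid L M (∅ : Set M)) :
    degForallSem L M = (n : ℕ∞) ∧ degForallSynt L M = (n : ℕ∞) := by
  classical
  obtain ⟨f, a, hfa⟩ : ∃ f : M ≃[L] M, ∃ a, f a ≠ a := by simpa [SemRigid] using hnotrigid
  have hsmall : ∀ m < n, ∃ A : Finset M, A.card = m ∧ ¬ SemRigid L M A := fun m hm => by
    obtain ⟨A, hA, ha, hb⟩ := Finset.exists_card_eq_notMem_pair a (f a) (m := m) (by omega)
    exact ⟨A, hA, not_semRigid_of_swap hUnary hfa.symm (fun r => (f.map_rel r _).symm) ha hb⟩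
  have hlarge : ∀ A : Finset M, A.card = n → (↑A : Set M)ᶜ.Subsingleton := fun A hA =>
    Finset.coe_compl_subsingleton (by omega)
  refine ⟨ENat.sInf_natCast_setOf_eq ?_ ?_, ENat.sInf_natCast_setOf_eq ?_ ?_⟩
  · exact fun A hA => semRigid_of_compl_subsingleton (hlarge A hA)
  · rintro m hm hrigid
    obtain ⟨A, hA, hnot⟩ := hsmall m hm
    exact hnot (hrigid A hA)
  · exact fun A hA => syntRigid_of_compl_subsingleton A.finite_toSet (hlarge A hA)
  · rintro m hm hrigid
    obtain ⟨A, hA, hnot⟩ := hsmall m hm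
    exact hnot (hrigid A hA).semRigid
end

section
/- Let L be a purely relational language all of whose relation symbols are unary, and let M be an infinite L-structure that is semantically ∅-rigid but not syntactically ∅-rigid (dcl(∅) ≠ M). Then for every n ∈ ℕ there exists A ⊆ M with |A| = n and dcl(A) ≠ M; consequently deg^{∀-sem}_rig(M) = 0 and deg^{∀-synt}_rig(M) = ∞. -/
open FirstOrder Language Set

universe u v w

variable (L : FirstOrder.Language.{u, v}) (M : Type w) [L.Structure M]

/-! In a unary relational language a formula over `A` sees only its parameters and finitely many
unary predicates `S`, so every permutation fixing `A` and preserving `S` preserves it. Hence if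
`b ∉ A` is defined over `A`, no other point outside `A` has the same `S`-type as `b`; and by
semantic ∅-rigidity each point of `A` differs from `b` in some predicate, since otherwise swapping
the two would be an automorphism. So `b` is cut out by finitely many predicates without
parameters, i.e. `b ∈ dcl ∅`. Choosing `b ∉ dcl ∅` and sets `A ∌ b` of every finite size gives
`dcl A ≠ M`. -/
namespace FirstOrder.Language

open Structure

variable {L M}

lemma Term.realize_comp_of_forall_mem_eq [L.IsRelational] {A : Set M} (σ : M → M)
    (hfix : ∀ a ∈ A, σ a = a) {β : Type*} (t : L[[A]].Term β) (v : β → M) :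
    t.realize (σ ∘ v) = σ (t.realize v) := by
  induction t with
  | var i => rfl
  | @func l f ts _ =>
    cases f with
    | inl g => exact isEmptyElim g
    | inr c =>
      cases l with
      | zero => exact (hfix c c.2).symm
      | succ k => exact isEmptyElim c

lemma relMap_comp_iff_of_forall {R : L.Relations 1} {σ : M → M}
    (h : ∀ m, RelMap R ![σ m] ↔ RelMap R ![m]) (x : Fin 1 → M) :
    RelMap R (σ ∘ x) ↔ RelMap R x := by
  rw [← FinVec.etaExpand_eq (σ ∘ x), ← FinVec.etaExpand_eq x]
  exact h (x 0)

lemma BoundedFormula.exists_finite_realize_comp_iff [L.IsRelational]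
    (hUnary : ∀ k : ℕ, k ≠ 1 → IsEmpty (L.Relations k)) {A : Set M} {α : Type*} {n : ℕ}
    (φ : L[[A]].BoundedFormula α n) :
    ∃ S : Set (L.Relations 1), S.Finite ∧
      ∀ σ : M ≃ M, (∀ a ∈ A, σ a = a) → (∀ R ∈ S, ∀ m, RelMap R ![σ m] ↔ RelMap R ![m]) →
        ∀ (v : α → M) (xs : Fin n → M), φ.Realize (σ ∘ v) (σ ∘ xs) ↔ φ.Realize v xs := by
  induction φ with
  | falsum => exact ⟨∅, finite_empty, fun _ _ _ _ _ => Iff.rfl⟩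
  | equal t₁ t₂ =>
    refine ⟨∅, finite_empty, fun σ hfix _ v xs => ?_⟩
    simp only [BoundedFormula.Realize, ← Sum.comp_elim,
      Term.realize_comp_of_forall_mem_eq σ hfix, σ.injective.eq_iff]
  | @rel l k R ts =>
    cases R with
    | inr c => exact isEmptyElim c
    | inl R =>
      rcases eq_or_ne k 1 with rfl | hk
      · refine ⟨{R}, finite_singleton R, fun σ hfix hS v xs => ?_⟩
        have hts : (fun i => (ts i).realize (Sum.elim (σ ∘ v) (σ ∘ xs))) =
            σ ∘ fun i => (ts i).realize (Sum.elim v xs) := by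
          ext i
          simp only [← Sum.comp_elim, Term.realize_comp_of_forall_mem_eq σ hfix,
            Function.comp_apply]
        change RelMap R _ ↔ RelMap R _
        rw [hts]
        exact relMap_comp_iff_of_forall (hS R rfl) _
      · exact (hUnary k hk).elim R
  | imp φ ψ ihφ ihψ =>
    obtain ⟨S₁, hS₁, H₁⟩ := ihφ
    obtain ⟨S₂, hS₂, H₂⟩ := ihψ
    refine ⟨S₁ ∪ S₂, hS₁.union hS₂, fun σ hfix hS v xs => ?_⟩
    exact imp_congr (H₁ σ hfix (fun R hR => hS R (.inl hR)) v xs)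
      (H₂ σ hfix (fun R hR => hS R (.inr hR)) v xs)
  | all φ ih =>
    obtain ⟨S, hS, H⟩ := ih
    refine ⟨S, hS, fun σ hfix hσ v xs => ?_⟩
    simp only [BoundedFormula.realize_all]
    refine ⟨fun h x => ?_, fun h x => ?_⟩
    · refine (H σ hfix hσ v _).mp ?_
      rw [Fin.comp_snoc]
      exact h (σ x)
    · obtain ⟨y, rfl⟩ := σ.surjective x
      rw [← Fin.comp_snoc]
      exact (H σ hfix hσ v _).mpr (h y)

lemma relMap_swap_iff [DecidableEq M] {R : L.Relations 1} {a b : M}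
    (h : RelMap R ![a] ↔ RelMap R ![b]) (m : M) : RelMap R ![Equiv.swap a b m] ↔ RelMap R ![m] := by
  rcases eq_or_ne m a with rfl | hma
  · rw [Equiv.swap_apply_left]
    exact h.symm
  rcases eq_or_ne m b with rfl | hmb
  · rw [Equiv.swap_apply_right]
    exact h
  rw [Equiv.swap_apply_of_ne_of_ne hma hmb]

lemma exists_not_relMap_iff_of_semRigid [L.IsRelational]
    (hUnary : ∀ k : ℕ, k ≠ 1 → IsEmpty (L.Relations k)) (hsem : SemRigid L M ∅) {a b : M}
    (hab : a ≠ b) : ∃ R : L.Relations 1, ¬(RelMap R ![a] ↔ RelMap R ![b]) := by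
  classical
  by_contra! hagree
  let f : M ≃[L] M :=
    { toEquiv := Equiv.swap a b
      map_fun' := fun g => isEmptyElim g
      map_rel' := fun {k} R x => by
        rcases eq_or_ne k 1 with rfl | hk
        · exact relMap_comp_iff_of_forall (relMap_swap_iff (hagree R)) x
        · exact (hUnary k hk).elim R }
  have hfa : Equiv.swap a b a = a := hsem f (fun _ h => h.elim) a
  rw [Equiv.swap_apply_left] at hfa
  exact hab hfa.symm

lemma definable₁_setOf_forall_relMap_iff {S : Set (L.Relations 1)} (hS : S.Finite) (b : M) :
    (∅ : Set M).Definable₁ L {m | ∀ R ∈ S, RelMap R ![m] ↔ RelMap R ![b]} := by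
  have hR (R : L.Relations 1) :
      (∅ : Set M).Definable L {x : Fin 1 → M | RelMap R x ↔ RelMap R ![b]} := by
    have hdef : (∅ : Set M).Definable L {x : Fin 1 → M | RelMap R x} :=
      empty_definable_iff.mpr ⟨R.formula Term.var, by ext; simp⟩
    by_cases hb : RelMap R ![b]
    · simpa [hb] using hdef
    · simpa [hb, compl_ofPred] using hdef.compl
  have := hS.to_subtype
  change (∅ : Set M).Definable L {x : Fin 1 → M | x 0 ∈ _}
  convert definable_iInter_of_finite fun R : S => hR R using 1
  ext x
  have hx : ![x 0] = x := FinVec.etaExpand_eq x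
  simp [hx]

lemma mem_dcl_empty_of_finite_separating {S : Set (L.Relations 1)} (hS : S.Finite) {b : M}
    (hsep : ∀ m ≠ b, ∃ R ∈ S, ¬(RelMap R ![m] ↔ RelMap R ![b])) : b ∈ dcl L M ∅ := by
  have hb : ({b} : Set M) = {m | ∀ R ∈ S, RelMap R ![m] ↔ RelMap R ![b]} := by
    ext m
    refine ⟨fun hm R _ => by rw [mem_singleton_iff.mp hm], fun hm => by_contra fun hmb => ?_⟩
    obtain ⟨R, hR, hne⟩ := hsep m hmb
    exact hne (hm R hR)
  change (∅ : Set M).Definable₁ L {b}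
  rw [hb]
  exact definable₁_setOf_forall_relMap_iff hS b

lemma exists_finite_separating_of_mem_dcl [L.IsRelational]
    (hUnary : ∀ k : ℕ, k ≠ 1 → IsEmpty (L.Relations k)) {A : Set M} {b : M}
    (hb : b ∈ dcl L M A) (hbA : b ∉ A) :
    ∃ S : Set (L.Relations 1), S.Finite ∧
      ∀ m ∉ A, m ≠ b → ∃ R ∈ S, ¬(RelMap R ![m] ↔ RelMap R ![b]) := by
  classical
  obtain ⟨φ, hφ⟩ := hb
  obtain ⟨S, hS, hinv⟩ := φ.exists_finite_realize_comp_iff hUnary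
  refine ⟨S, hS, fun m hmA hmb => ?_⟩
  by_contra! hagree
  have hrealize (c : M) : φ.Realize ![c] ↔ c = b := by
    simpa using (Set.ext_iff.mp hφ ![c]).symm
  have hfix : ∀ a ∈ A, Equiv.swap b m a = a := fun a ha =>
    Equiv.swap_apply_of_ne_of_ne (ne_of_mem_of_not_mem ha hbA) (ne_of_mem_of_not_mem ha hmA)
  have hswap := hinv (Equiv.swap b m) hfix (fun R hR => relMap_swap_iff (hagree R hR).symm)
    ![m] default
  have hσm : ⇑(Equiv.swap b m) ∘ ![m] = ![b] := by
    ext i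
    fin_cases i
    simp
  rw [hσm, Subsingleton.elim (_ ∘ default) default] at hswap
  exact hmb ((hrealize m).mp (hswap.mp ((hrealize b).mpr rfl)))

lemma mem_dcl_empty_of_mem_dcl [L.IsRelational]
    (hUnary : ∀ k : ℕ, k ≠ 1 → IsEmpty (L.Relations k)) (hsem : SemRigid L M ∅) {A : Set M}
    (hA : A.Finite) {b : M} (hb : b ∈ dcl L M A) (hbA : b ∉ A) : b ∈ dcl L M ∅ := by
  obtain ⟨S, hS, hsepS⟩ := exists_finite_separating_of_mem_dcl hUnary hb hbA
  have hsepA : ∀ a ∈ A, ∃ R : L.Relations 1, ¬(RelMap R ![a] ↔ RelMap R ![b]) := fun a ha =>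
    exists_not_relMap_iff_of_semRigid hUnary hsem (ne_of_mem_of_not_mem ha hbA)
  choose RA hRA using hsepA
  refine mem_dcl_empty_of_finite_separating (hS.union (hA.dependent_image RA)) fun m hmb => ?_
  by_cases hmA : m ∈ A
  · exact ⟨RA m hmA, .inr ⟨m, hmA, rfl⟩, hRA m hmA⟩
  · obtain ⟨R, hR, hne⟩ := hsepS m hmA hmb
    exact ⟨R, .inl hR, hne⟩

end FirstOrder.Language

section Degrees

variable {L M}

lemma degForallSem_eq_zero (hsem : SemRigid L M ∅) : degForallSem L M = 0 :=
  nonpos_iff_eq_zero.mp <| sInf_le ⟨0, rfl, fun A hA => by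
    rwa [Finset.card_eq_zero.mp hA, Finset.coe_empty]⟩

lemma degForallSynt_eq_top (h : ∀ n : ℕ, ∃ A : Finset M, A.card = n ∧ ¬SyntRigid L M ↑A) :
    degForallSynt L M = ⊤ := by
  refine sInf_eq_top.mpr ?_
  rintro _ ⟨n, rfl, hall⟩
  obtain ⟨A, hA, hnot⟩ := h n
  exact absurd (hall A hA) hnot

end Degrees

/-- An infinite structure in a unary relational language that is semantically ∅-rigid
but not syntactically ∅-rigid admits, for each `n`, an `n`-element set `A` with
`dcl(A) ≠ M`; consequently its ∀-semantic degree is `0` and its ∀-syntactic degree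
is `∞`. -/
theorem stmt_10 [L.IsRelational] (hUnary : ∀ k : ℕ, k ≠ 1 → IsEmpty (L.Relations k))
    [Infinite M] (hsem : SemRigid L M (∅ : Set M))
    (hnotsynt : ¬ SyntRigid L M (∅ : Set M)) :
    (∀ n : ℕ, ∃ A : Finset M, A.card = n ∧ dcl L M ↑A ≠ Set.univ) ∧
    degForallSem L M = 0 ∧ degForallSynt L M = ⊤ := by
  obtain ⟨b, hb⟩ := (ne_univ_iff_exists_notMem _).mp hnotsynt
  have hdcl (n : ℕ) : ∃ A : Finset M, A.card = n ∧ dcl L M ↑A ≠ Set.univ := by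
    obtain ⟨A, hAb, hAcard⟩ := (finite_singleton b).infinite_compl.exists_subset_card_eq n
    have hbA : b ∉ (A : Set M) := fun h => hAb h rfl
    refine ⟨A, hAcard, fun hA => hb ?_⟩
    exact mem_dcl_empty_of_mem_dcl hUnary hsem A.finite_toSet (hA ▸ mem_univ b) hbA
  exact ⟨hdcl, degForallSem_eq_zero hsem, degForallSynt_eq_top hdcl⟩
end

section
/- Suppose M and N are nonempty and the composition M[N] is E-definable. Then the map Φ : Aut(M) × (M → Aut(N)) → Aut(M[N]) defined by Φ(g, h)(a, b) = (g(a), h(a)(b)) is well-defined (each Φ(g, h) is an automorphism of M[N]) and bijective; thus Aut(M[N]) is isomorphic to the wreath product of Aut(M) and Aut(N). -/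
/-! Since `E` is `∅`-definable, every automorphism `σ` of `M[N]` preserves it, so the first
coordinate of `σ (a, b)` depends only on `a`. Reading off this first coordinate gives an
automorphism `g` of `M`, and for each `a` the second coordinate of `σ (a, ·)` gives an
automorphism `h a` of `N`; then `σ = Φ (g, h)`. -/

open FirstOrder Language Set

universe u₁ v₁ u₂ v₂ w₁ w₂

variable (LM : FirstOrder.Language.{u₁, v₁}) (LN : FirstOrder.Language.{u₂, v₂})
  (M : Type w₁) (N : Type w₂) [LM.Structure M] [LN.Structure N]

/-- The composition `M[N]` of the structures `M` and `N`: the structure on `M × N` in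
the (disjoint) union language `Σ_M ∪ Σ_N` where a relation symbol of `Σ_M` holds of a
tuple iff it holds of the tuple of first coordinates in `M`, and a relation symbol of
`Σ_N` holds of a tuple iff all first coordinates agree and it holds of the tuple of
second coordinates in `N`. -/
instance compStructure [LM.IsRelational] [LN.IsRelational] :
    (LM.sum LN).Structure (M × N) where
  funMap f _ := Sum.casesOn f (fun f₁ => isEmptyElim f₁) (fun f₂ => isEmptyElim f₂)
  RelMap r x :=
    Sum.casesOn r
      (fun rM => Structure.RelMap rM (fun i => (x i).1))
      (fun rN => (∀ i j, (x i).1 = (x j).1) ∧ Structure.RelMap rN (fun i => (x i).2))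

/-- The composition `M[N]` is `E`-definable if the equivalence relation identifying the
copies of `N` (equality of first coordinates) is definable without parameters. -/
def EDefinable [LM.IsRelational] [LN.IsRelational] : Prop :=
  (∅ : Set (M × N)).Definable (LM.sum LN) {x : Fin 2 → M × N | (x 0).1 = (x 1).1}

theorem Set.Definable.comp_equiv_mem_iff {L : Language} {K : Type*} [L.Structure K] {α : Type*}
    {s : Set (α → K)} (hs : (∅ : Set K).Definable L s) (σ : K ≃[L] K) (x : α → K) :
    σ ∘ x ∈ s ↔ x ∈ s := by
  obtain ⟨φ, rfl⟩ := empty_definable_iff.mp hs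
  exact StrongHomClass.realize_formula σ φ

section

variable {LM LN M N}

theorem relMap_apply_fiberwise_iff (h : M → N ≃[LN] N) {n : ℕ} (r : LN.Relations n)
    {x : Fin n → M × N} (hx : ∀ i j, (x i).1 = (x j).1) :
    (Structure.RelMap r fun i => h (x i).1 (x i).2) ↔ Structure.RelMap r fun i => (x i).2 := by
  cases n with
  | zero => rw [Subsingleton.elim (fun i => h (x i).1 (x i).2) fun i => (x i).2]
  | succ n =>
    have hconst : (fun i => h (x i).1 (x i).2) = h (x 0).1 ∘ fun i => (x i).2 := by
      funext i
      rw [Function.comp_apply, hx i 0]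
    rw [hconst]
    exact (h (x 0).1).map_rel r _

variable [LM.IsRelational] [LN.IsRelational]

@[simp]
theorem compStructure_relMap_inr {n : ℕ} (r : LN.Relations n) (x : Fin n → M × N) :
    @Structure.RelMap (LM.sum LN) (M × N) _ n (Sum.inr r) x ↔
      (∀ i j, (x i).1 = (x j).1) ∧ Structure.RelMap r fun i => (x i).2 :=
  Iff.rfl

theorem EDefinable.fst_apply_eq_iff (hE : EDefinable LM LN M N)
    (σ : (M × N) ≃[LM.sum LN] (M × N)) (p q : M × N) :
    (σ p).1 = (σ q).1 ↔ p.1 = q.1 := by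
  simpa using Set.Definable.comp_equiv_mem_iff hE σ ![p, q]

/-- The automorphism `Φ (g, h)` of `M[N]`. -/
def compAut (g : M ≃[LM] M) (h : M → N ≃[LN] N) : (M × N) ≃[LM.sum LN] (M × N) where
  toFun p := (g p.1, h p.1 p.2)
  invFun p := (g.symm p.1, (h (g.symm p.1)).symm p.2)
  left_inv p := by simp
  right_inv p := by simp
  map_fun' f := isEmptyElim f
  map_rel' := by
    rintro n (r | r) x
    · exact g.map_rel r _
    · simp only [compStructure_relMap_inr, Function.comp_apply, g.injective.eq_iff]
      exact and_congr_right (relMap_apply_fiberwise_iff h r)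

theorem compAut_injective [Nonempty N] :
    Function.Injective (Function.uncurry (compAut (LM := LM) (LN := LN) (M := M) (N := N))) := by
  rintro ⟨g, h⟩ ⟨g', h'⟩ heq
  have hpt (a : M) (b : N) : (g a, h a b) = (g' a, h' a b) := DFunLike.congr_fun heq (a, b)
  have hg : g = g' :=
    Language.Equiv.ext fun a => congrArg Prod.fst (hpt a (Classical.arbitrary N))
  have hh : h = h' := funext fun a => Language.Equiv.ext fun b => congrArg Prod.snd (hpt a b)
  rw [hg, hh]

namespace FstPreserving

variable {σ : (M × N) ≃[LM.sum LN] (M × N)} (hσ : ∀ p q, (σ p).1 = (σ q).1 ↔ p.1 = q.1)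
include hσ

theorem fst_apply_mk_eq (a : M) (b b' : N) : (σ (a, b)).1 = (σ (a, b')).1 :=
  (hσ _ _).2 rfl

theorem fst_symm_apply (a : M) (p : M × N) (hp : p.1 = (σ (a, p.2)).1) : (σ.symm p).1 = a := by
  refine (hσ _ (a, p.2)).1 ?_
  rw [σ.apply_symm_apply, hp]

def baseAut (b₀ : N) : M ≃[LM] M where
  toFun a := (σ (a, b₀)).1
  invFun c := (σ.symm (c, b₀)).1
  left_inv a := fst_symm_apply hσ a _ rfl
  right_inv c := by
    show (σ ((σ.symm (c, b₀)).1, b₀)).1 = c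
    rw [fst_apply_mk_eq hσ _ b₀ (σ.symm (c, b₀)).2, Prod.mk.eta, σ.apply_symm_apply]
  map_fun' f := isEmptyElim f
  map_rel' r v := σ.map_rel (Sum.inl r) fun i => (v i, b₀)

-- `(σ (a, b)).1` does not depend on `b`: it is the fibre onto which `σ` maps the fibre of `a`.
def fiberAut (a : M) : N ≃[LN] N where
  toFun b := (σ (a, b)).2
  invFun b := (σ.symm ((σ (a, b)).1, b)).2
  left_inv b := by
    show (σ.symm ((σ (a, (σ (a, b)).2)).1, (σ (a, b)).2)).2 = b
    rw [fst_apply_mk_eq hσ a _ b, Prod.mk.eta, σ.symm_apply_apply]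
  right_inv b := by
    show (σ (a, (σ.symm ((σ (a, b)).1, b)).2)).2 = b
    have hmk : (a, (σ.symm ((σ (a, b)).1, b)).2) = σ.symm ((σ (a, b)).1, b) :=
      Prod.ext (fst_symm_apply hσ a ((σ (a, b)).1, b) rfl).symm rfl
    rw [hmk, σ.apply_symm_apply]
  map_fun' f := isEmptyElim f
  map_rel' r v := by
    have hrel := σ.map_rel (Sum.inr r) fun i => (a, v i)
    simp only [compStructure_relMap_inr, Function.comp_apply] at hrel
    rwa [and_iff_right fun i j => fst_apply_mk_eq hσ a (v i) (v j),
      and_iff_right fun _ _ => trivial] at hrel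

theorem compAut_baseAut_fiberAut (b₀ : N) : compAut (baseAut hσ b₀) (fiberAut hσ) = σ :=
  Language.Equiv.ext fun _ => Prod.ext (fst_apply_mk_eq hσ _ _ _) rfl

end FstPreserving

theorem compAut_surjective [Nonempty N] (hE : EDefinable LM LN M N) :
    Function.Surjective (Function.uncurry (compAut (LM := LM) (LN := LN) (M := M) (N := N))) :=
  fun σ => ⟨(_, _),
    FstPreserving.compAut_baseAut_fiberAut (hE.fst_apply_eq_iff σ) (Classical.arbitrary N)⟩

end

theorem stmt_18 [LM.IsRelational] [LN.IsRelational] [Nonempty N]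
    (hE : EDefinable LM LN M N) :
    ∃ Φ : (M ≃[LM] M) × (M → (N ≃[LN] N)) → ((M × N) ≃[LM.sum LN] (M × N)),
      (∀ (g : M ≃[LM] M) (h : M → (N ≃[LN] N)) (a : M) (b : N),
        Φ (g, h) (a, b) = (g a, h a b)) ∧
      Function.Bijective Φ :=
  ⟨Function.uncurry compAut, fun _ _ _ _ => rfl, compAut_injective, compAut_surjective hE⟩
end
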